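/- (Asymptotic data contamination bound) Let G and H be joint distributions of (X,Y) on ℝ^p × {0,1} with the X-marginal of G admitting a density, let 0 ≤ ε < 1, let G̃ = (1-ε)G + εH, and assume G̃(η̃(X)=0) = 0 where η̃ is the Bayes decision function of G̃. If (f̃_n) is a sequence of decision functions whose risks under G̃ converge to the Bayes risk under G̃, then limsup_{n→∞} ( R_G(f̃_n) - R_G* ) ≤ ε/(1-ε), where R_G* is the Bayes risk under G. -/

import Mathlib

open MeasureTheory Filter

/-- sign function: 1 if t > 0, -1 otherwise. -/
noncomputable def sgn (t : ℝ) : ℝ := if 0 < t then 1 else -1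

/-- Risk under 0-1 loss of the decision rule `1_{f(X)>0}` when `(X,Y) ~ P`,
    labels encoded as `Bool` (`true` = 1): `R(f) = P(Y ≠ 1_{f(X)>0})`. -/
noncomputable def risk {𝒳 : Type*} [MeasurableSpace 𝒳]
    (P : Measure (𝒳 × Bool)) (f : 𝒳 → ℝ) : ℝ :=
  (P {q | (q.2 = true) ≠ (0 < f q.1)}).toReal

/-- `η` is the Bayes decision function of the joint distribution `P` of `(X,Y)`:
    `η(x) = P(Y=1 | X=x) - 1/2`, i.e. `η` is measurable, takes values in `[-1/2,1/2]`,
    and `∫_A (η + 1/2) dP_X = P(A × {1})` for all measurable `A`. -/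
def IsBayesDecisionFunction {𝒳 : Type*} [MeasurableSpace 𝒳]
    (P : Measure (𝒳 × Bool)) (η : 𝒳 → ℝ) : Prop :=
  Measurable η ∧ (∀ x, η x ∈ Set.Icc (-(1/2) : ℝ) (1/2)) ∧
    ∀ A : Set 𝒳, MeasurableSet A →
      ∫ x in A, (η x + 1/2) ∂(P.map Prod.fst) = (P (A ×ˢ ({true} : Set Bool))).toReal

/-- The contaminated distribution `G̃ = (1-ε)G + εH`. -/
noncomputable def contaminate {Ω : Type*} [MeasurableSpace Ω]
    (G H : Measure Ω) (ε : ℝ) : Measure Ω :=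
  ENNReal.ofReal (1 - ε) • G + ENNReal.ofReal ε • H

/-!
Since the risk is affine in the distribution, `R_G̃ = (1-ε) R_G + ε R_H`. A Bayes rule minimizes
the conditional misclassification probability pointwise, so the Bayes rule `η̃` of `G̃` beats `η`
under `G̃`, whence
`(1-ε) (R_G(f) - R_G(η)) ≤ R_G̃(f) - R_G̃(η̃) + ε (R_H(η) - R_H(f)) ≤ R_G̃(f) - R_G̃(η̃) + ε`,
and the first term on the right tends to `0`.
-/

section BayesRisk

variable {𝒳 : Type*}

/-- The probability that `1_{f(X)>0}` misclassifies, given `X = x`, when `η x = P(Y=1 | X=x) - 1/2`. -/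
noncomputable def conditionalRisk (η f : 𝒳 → ℝ) : 𝒳 → ℝ :=
  {x | 0 < f x}.piecewise (fun x => 1/2 - η x) (fun x => η x + 1/2)

lemma conditionalRisk_self_le (η f : 𝒳 → ℝ) (x : 𝒳) :
    conditionalRisk η η x ≤ conditionalRisk η f x := by
  by_cases hη : 0 < η x <;> by_cases hf : 0 < f x <;>
    simp only [conditionalRisk, Set.piecewise, Set.mem_ofPred_eq, hη, hf, if_true, if_false] <;>
    linarith

variable [MeasurableSpace 𝒳]

lemma risk_nonneg (P : Measure (𝒳 × Bool)) (f : 𝒳 → ℝ) : 0 ≤ risk P f :=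
  ENNReal.toReal_nonneg

lemma risk_le_one (P : Measure (𝒳 × Bool)) [IsProbabilityMeasure P] (f : 𝒳 → ℝ) :
    risk P f ≤ 1 :=
  ENNReal.toReal_le_of_le_ofReal zero_le_one (by simpa using prob_le_one)

lemma measure_prod_true_add_measure_prod_false (P : Measure (𝒳 × Bool)) {A : Set 𝒳}
    (hA : MeasurableSet A) : P (A ×ˢ {true}) + P (A ×ˢ {false}) = P.map Prod.fst A := by
  rw [Measure.map_apply measurable_fst hA,
    ← measure_union (Set.disjoint_prod.2 (Or.inr (by simp))) (hA.prod (measurableSet_singleton _))]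
  congr 1
  ext ⟨x, y⟩
  cases y <;> simp

namespace IsBayesDecisionFunction

variable {P : Measure (𝒳 × Bool)} {η : 𝒳 → ℝ}

lemma integrable [IsFiniteMeasure P] (hη : IsBayesDecisionFunction P η) :
    Integrable η (P.map Prod.fst) :=
  Integrable.of_bound hη.1.aestronglyMeasurable (1/2) <| ae_of_all _ fun x =>
    abs_le.2 (hη.2.1 x)

lemma integral_eq_measure_prod_false [IsFiniteMeasure P] (hη : IsBayesDecisionFunction P η)
    {A : Set 𝒳} (hA : MeasurableSet A) :
    ∫ x in A, (1/2 - η x) ∂(P.map Prod.fst) = (P (A ×ˢ {false})).toReal := by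
  have hsum := congrArg ENNReal.toReal (measure_prod_true_add_measure_prod_false P hA)
  rw [ENNReal.toReal_add (measure_ne_top _ _) (measure_ne_top _ _), ← hη.2.2 A hA] at hsum
  have hint : IntegrableOn (fun x => η x + 1/2) A (P.map Prod.fst) :=
    (hη.integrable.add (integrable_const _)).integrableOn
  calc ∫ x in A, (1/2 - η x) ∂(P.map Prod.fst)
      = ∫ x in A, (1 - (η x + 1/2)) ∂(P.map Prod.fst) := by congr 1; ext x; ring
    _ = (P (A ×ˢ {false})).toReal := by
      rw [integral_sub (integrable_const _) hint, setIntegral_const, measureReal_def, ← hsum]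
      simp

lemma risk_eq_integral_conditionalRisk [IsFiniteMeasure P] (hη : IsBayesDecisionFunction P η)
    {f : 𝒳 → ℝ} (hf : Measurable f) :
    risk P f = ∫ x, conditionalRisk η f x ∂(P.map Prod.fst) := by
  set B := {x | 0 < f x}
  have hB : MeasurableSet B := measurableSet_lt measurable_const hf
  have hmis : {q : 𝒳 × Bool | (q.2 = true) ≠ (0 < f q.1)} = B ×ˢ {false} ∪ Bᶜ ×ˢ {true} := by
    ext ⟨x, y⟩
    cases y <;> simp [B]
  rw [risk, conditionalRisk,
    integral_piecewise (f := fun x => 1/2 - η x) (g := fun x => η x + 1/2) hB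
      ((integrable_const _).sub hη.integrable).integrableOn
      (hη.integrable.add (integrable_const _)).integrableOn,
    hη.integral_eq_measure_prod_false hB, hη.2.2 _ hB.compl, hmis,
    measure_union (Set.disjoint_prod.2 (Or.inl disjoint_compl_right))
      (hB.compl.prod (measurableSet_singleton _)),
    ENNReal.toReal_add (measure_ne_top _ _) (measure_ne_top _ _)]

lemma integrable_conditionalRisk [IsFiniteMeasure P] (hη : IsBayesDecisionFunction P η)
    {f : 𝒳 → ℝ} (hf : Measurable f) : Integrable (conditionalRisk η f) (P.map Prod.fst) :=
  Integrable.piecewise (f := fun x => 1/2 - η x) (g := fun x => η x + 1/2)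
    (measurableSet_lt measurable_const hf)
    ((integrable_const _).sub hη.integrable).integrableOn
    (hη.integrable.add (integrable_const _)).integrableOn

lemma risk_le [IsFiniteMeasure P] (hη : IsBayesDecisionFunction P η) {f : 𝒳 → ℝ}
    (hf : Measurable f) : risk P η ≤ risk P f := by
  rw [hη.risk_eq_integral_conditionalRisk hη.1, hη.risk_eq_integral_conditionalRisk hf]
  exact integral_mono (hη.integrable_conditionalRisk hη.1) (hη.integrable_conditionalRisk hf)
    (conditionalRisk_self_le η f)

end IsBayesDecisionFunction

end BayesRisk

section Contamination

variable {Ω : Type*} [MeasurableSpace Ω] {G H : Measure Ω} {ε : ℝ}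

instance isFiniteMeasure_contaminate [IsFiniteMeasure G] [IsFiniteMeasure H] :
    IsFiniteMeasure (contaminate G H ε) :=
  ⟨by simp only [contaminate, Measure.add_apply, Measure.smul_apply, smul_eq_mul]; finiteness⟩

lemma risk_contaminate {G H : Measure (Ω × Bool)} [IsFiniteMeasure G] [IsFiniteMeasure H]
    (hε : 0 ≤ ε) (hε1 : ε ≤ 1) (f : Ω → ℝ) :
    risk (contaminate G H ε) f = (1 - ε) * risk G f + ε * risk H f := by
  rw [risk, risk, risk, contaminate, Measure.add_apply, Measure.smul_apply,
    Measure.smul_apply, smul_eq_mul, smul_eq_mul,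
    ENNReal.toReal_add (by finiteness) (by finiteness),
    ENNReal.toReal_mul, ENNReal.toReal_mul, ENNReal.toReal_ofReal (by linarith),
    ENNReal.toReal_ofReal hε]

lemma risk_sub_risk_le_of_contaminate {G H : Measure (Ω × Bool)} [IsProbabilityMeasure G]
    [IsProbabilityMeasure H] (hε : 0 ≤ ε) (hε1 : ε < 1) {η ηt : Ω → ℝ} (hη : Measurable η)
    (hηt : IsBayesDecisionFunction (contaminate G H ε) ηt) (f : Ω → ℝ) :
    risk G f - risk G η
      ≤ (risk (contaminate G H ε) f - risk (contaminate G H ε) ηt + ε) / (1 - ε) := by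
  have hopt := hηt.risk_le hη
  simp only [risk_contaminate hε hε1.le] at hopt ⊢
  rw [le_div_iff₀ (by linarith)]
  linarith [mul_nonneg hε (by linarith [risk_nonneg H f, risk_le_one H η] :
    0 ≤ risk H f + 1 - risk H η)]

end Contamination

theorem statement11_general {p : ℕ}
    (G H : Measure ((Fin p → ℝ) × Bool))
    [IsProbabilityMeasure G] [IsProbabilityMeasure H]
    (ε : ℝ) (hε : 0 ≤ ε) (hε1 : ε < 1)
    (η ηt : (Fin p → ℝ) → ℝ)
    (hη : IsBayesDecisionFunction G η)
    (hηt : IsBayesDecisionFunction (contaminate G H ε) ηt)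
    (f : ℕ → (Fin p → ℝ) → ℝ)
    (hrisk : Tendsto (fun n => risk (contaminate G H ε) (f n)) atTop
      (nhds (risk (contaminate G H ε) ηt))) :
    limsup (fun n => risk G (f n) - risk G η) atTop ≤ ε / (1 - ε) := by
  set Gt := contaminate G H ε
  have hbound : Tendsto (fun n => (risk Gt (f n) - risk Gt ηt + ε) / (1 - ε)) atTop
      (nhds (ε / (1 - ε))) := by
    simpa using ((hrisk.sub_const (risk Gt ηt)).add_const ε).div_const (1 - ε)
  have hcobdd : IsCoboundedUnder (· ≤ ·) atTop (fun n => risk G (f n) - risk G η) :=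
    isBoundedUnder_of ⟨-1, fun n => by linarith [risk_nonneg G (f n), risk_le_one G η]⟩
      |>.isCoboundedUnder_le
  calc limsup (fun n => risk G (f n) - risk G η) atTop
      ≤ limsup (fun n => (risk Gt (f n) - risk Gt ηt + ε) / (1 - ε)) atTop :=
        limsup_le_limsup (Eventually.of_forall fun n =>
          risk_sub_risk_le_of_contaminate hε hε1 hη.1 hηt (f n)) hcobdd hbound.isBoundedUnder_le
    _ = ε / (1 - ε) := hbound.limsup_eq

/-- Asymptotic data contamination bound:
limsup_n (R_G(f̃_n) - R_G*) ≤ ε/(1-ε). -/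
theorem statement11 {p : ℕ}
    (G H : Measure ((Fin p → ℝ) × Bool))
    [IsProbabilityMeasure G] [IsProbabilityMeasure H]
    (g : (Fin p → ℝ) → ℝ)
    (hGg : G.map Prod.fst = volume.withDensity fun x => ENNReal.ofReal (g x))
    (ε : ℝ) (hε : 0 ≤ ε) (hε1 : ε < 1)
    (η ηt : (Fin p → ℝ) → ℝ)
    (hη : IsBayesDecisionFunction G η)
    (hηt : IsBayesDecisionFunction (contaminate G H ε) ηt)
    (hηt0 : (contaminate G H ε).map Prod.fst {x | ηt x = 0} = 0)
    (f : ℕ → (Fin p → ℝ) → ℝ) (hf : ∀ n, Measurable (f n))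
    (hrisk : Tendsto (fun n => risk (contaminate G H ε) (f n)) atTop
      (nhds (risk (contaminate G H ε) ηt))) :
    limsup (fun n => risk G (f n) - risk G η) atTop ≤ ε / (1 - ε) :=
  statement11_general G H ε hε hε1 η ηt hη hηt f hrisk
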